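/- Let G be an r-SPTG, ℓ a non-urgent location of Min and ℓ' a non-urgent location of Max. Then for all 0 ≤ ν < ν' ≤ r: Val_G(ℓ,ν) ≤ (ν'−ν)·π(ℓ) + Val_G(ℓ,ν') and Val_G(ℓ',ν) ≥ (ν'−ν)·π(ℓ') + Val_G(ℓ',ν') (inequalities in ℝ ∪ {−∞,+∞}). Equivalently, when the values are finite, the slope (Val_G(ℓ,ν') − Val_G(ℓ,ν))/(ν'−ν) is at least −π(ℓ) for Min's non-urgent locations and at most −π(ℓ') for Max's non-urgent locations. -/

import Mathlib

/-!
Common formalization of one-clock priced timed games (PTGs), following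
"Simple Priced Timed Games are not That Simple".
-/

namespace PTGPaper

/-- The three kinds of locations: locations of player Min, of player Max, and final locations. -/
inductive Owner : Type
  | min : Owner
  | max : Owner
  | final : Owner
deriving DecidableEq

/-- A transition of a one-clock priced timed game: a source location, a guard
(an interval with endpoints `lo`, `hi`, with openness flags `loOpen`, `hiOpen`),
a reset flag, a discrete price, and a target location. -/
structure PTrans (L : Type) where
  src : L
  lo : ℝ
  hi : ℝ
  loOpen : Bool
  hiOpen : Bool
  reset : Bool
  price : ℤ
  tgt : L

noncomputable instance {L : Type} : DecidableEq (PTrans L) := Classical.decEq _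

/-- Membership of a clock value in the guard of a transition. -/
def PTrans.memGuard {L : Type} (δ : PTrans L) (ν : ℝ) : Prop :=
  (if δ.loOpen then δ.lo < ν else δ.lo ≤ ν) ∧
  (if δ.hiOpen then ν < δ.hi else ν ≤ δ.hi)

/-- A one-clock priced timed game. -/
structure PTG where
  Loc : Type
  locFin : Fintype Loc
  locDec : DecidableEq Loc
  owner : Loc → Owner
  urgent : Loc → Bool
  M : ℕ
  trans : Finset (PTrans Loc)
  price : Loc → ℤ
  fcost : Loc → ℝ → ℝ

attribute [instance] PTG.locFin PTG.locDec

/-- A configuration: a location together with a clock valuation. -/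
abbrev PTG.Config (G : PTG) := G.Loc × ℝ

/-- `G.Move s s' t δ c` holds if from configuration `s`, waiting `t` time units and then
taking transition `δ` is legal, leads to configuration `s'` and costs `c`. -/
def PTG.Move (G : PTG) (s s' : G.Config) (t : ℝ) (δ : PTrans G.Loc) (c : ℝ) : Prop :=
  δ ∈ G.trans ∧ δ.src = s.1 ∧ 0 ≤ t ∧ (G.urgent s.1 = true → t = 0) ∧
  δ.memGuard (s.2 + t) ∧ s'.1 = δ.tgt ∧
  s'.2 = (if δ.reset then 0 else s.2 + t) ∧
  c = (δ.price : ℝ) + t * (G.price s.1 : ℝ)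

/-- A finite play (history): an initial configuration followed by a list of steps,
each step consisting of a delay, the transition taken, and the configuration reached. -/
structure Hist (L : Type) where
  start : L × ℝ
  steps : List (ℝ × PTrans L × (L × ℝ))

namespace Hist

variable {L : Type}

def lastFrom (s : L × ℝ) : List (ℝ × PTrans L × (L × ℝ)) → L × ℝ
  | [] => s
  | (_, _, s') :: rest => lastFrom s' rest

/-- The last configuration of a finite play. -/
def last (h : Hist L) : L × ℝ := lastFrom h.start h.steps

def costFrom (π : L → ℤ) (s : L × ℝ) : List (ℝ × PTrans L × (L × ℝ)) → ℝ
  | [] => 0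
  | (t, δ, s') :: rest => ((δ.price : ℝ) + t * (π s.1 : ℝ)) + costFrom π s' rest

/-- The sum of the prices of the discrete transitions along a finite play. -/
def discSum (h : Hist L) : ℤ := (h.steps.map (fun st => st.2.1.price)).sum

/-- The prefix of a finite play consisting of its first `i` steps. -/
def take (h : Hist L) (i : ℕ) : Hist L := ⟨h.start, h.steps.take i⟩

end Hist

/-- Validity of a sequence of steps, starting from a given configuration. -/
def PTG.ValidFrom (G : PTG) : G.Config → List (ℝ × PTrans G.Loc × G.Config) → Prop
  | _, [] => True
  | s, (t, δ, s') :: rest => (∃ c, G.Move s s' t δ c) ∧ G.ValidFrom s' rest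

/-- A valid finite play of `G`. -/
def PTG.HistValid (G : PTG) (h : Hist G.Loc) : Prop :=
  0 ≤ h.start.2 ∧ h.start.2 ≤ (G.M : ℝ) ∧ G.ValidFrom h.start h.steps

/-- Accumulated cost of the moves of a finite play (without any final cost). -/
def PTG.accCost (G : PTG) (h : Hist G.Loc) : ℝ := Hist.costFrom G.price h.start h.steps

/-- A (deterministic) strategy, given as a function from finite plays to
a pair (delay, transition). -/
abbrev StratFun (L : Type) := Hist L → ℝ × PTrans L

/-- A finite play is consistent with strategy `σ` of the player owning locations of kind `P`
if at every step taken from a location of that player, the move is the one prescribed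
by `σ` on the corresponding prefix. -/
def PTG.Consistent (G : PTG) (P : Owner) (σ : StratFun G.Loc) (h : Hist G.Loc) : Prop :=
  ∀ (i : ℕ) (hi : i < h.steps.length),
    G.owner (h.take i).last.1 = P →
    ((h.steps.get ⟨i, hi⟩).1, (h.steps.get ⟨i, hi⟩).2.1) = σ (h.take i)

/-- A strategy of the player owning the locations of kind `P` is valid if it proposes
a legal move after every valid finite play ending in a location of that player. -/
def PTG.StratValid (G : PTG) (P : Owner) (σ : StratFun G.Loc) : Prop :=
  ∀ h : Hist G.Loc, G.HistValid h → G.owner h.last.1 = P →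
    ∃ s' c, G.Move h.last s' (σ h).1 (σ h).2 c

def PTG.MinValid (G : PTG) (σ : StratFun G.Loc) : Prop := G.StratValid Owner.min σ

def PTG.MaxValid (G : PTG) (τ : StratFun G.Loc) : Prop := G.StratValid Owner.max τ

/-- The configuration reached from `s` by the move `td = (delay, transition)`. -/
def PTG.nextCfg (G : PTG) (s : G.Config) (td : ℝ × PTrans G.Loc) : G.Config :=
  (td.2.tgt, if td.2.reset then 0 else s.2 + td.1)

/-- The finite play of length (at most) `n` obtained from initial configuration `s₀` when
Min plays `σ` and Max plays `τ` (the play stops growing when a final location is reached). -/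
def PTG.histOf (G : PTG) (σ τ : StratFun G.Loc) (s₀ : G.Config) : ℕ → Hist G.Loc
  | 0 => ⟨s₀, []⟩
  | n + 1 =>
    let h := G.histOf σ τ s₀ n
    if G.owner h.last.1 = Owner.final then h
    else
      let td := if G.owner h.last.1 = Owner.min then σ h else τ h
      ⟨h.start, h.steps ++ [(td.1, td.2, G.nextCfg h.last td)]⟩

open Classical in
/-- The cost of the play from `s₀` determined by the profile `(σ, τ)`: `+∞` if no final
location is ever reached, and otherwise the accumulated cost up to the first visit of a
final location, plus the final cost function of that location evaluated at the current
clock value. -/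
noncomputable def PTG.playCost (G : PTG) (σ τ : StratFun G.Loc) (s₀ : G.Config) : EReal :=
  if hx : ∃ n, G.owner ((G.histOf σ τ s₀ n).last.1) = Owner.final then
    (((G.accCost (G.histOf σ τ s₀ (Nat.find hx)) +
        G.fcost ((G.histOf σ τ s₀ (Nat.find hx)).last.1)
          ((G.histOf σ τ s₀ (Nat.find hx)).last.2)) : ℝ) : EReal)
  else ⊤

/-- `Val^σ(s)`, the value of a Min strategy `σ`. -/
noncomputable def PTG.minValue (G : PTG) (σ : StratFun G.Loc) (s : G.Config) : EReal :=
  ⨆ τ : {τ : StratFun G.Loc // G.MaxValid τ}, G.playCost σ τ.1 s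

/-- `Val^τ(s)`, the value of a Max strategy `τ`. -/
noncomputable def PTG.maxValue (G : PTG) (τ : StratFun G.Loc) (s : G.Config) : EReal :=
  ⨅ σ : {σ : StratFun G.Loc // G.MinValid σ}, G.playCost σ.1 τ s

/-- The upper value of the game. -/
noncomputable def PTG.uval (G : PTG) (s : G.Config) : EReal :=
  ⨅ σ : {σ : StratFun G.Loc // G.MinValid σ}, G.minValue σ.1 s

/-- The lower value of the game. -/
noncomputable def PTG.lval (G : PTG) (s : G.Config) : EReal :=
  ⨆ τ : {τ : StratFun G.Loc // G.MaxValid τ}, G.maxValue τ.1 s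

/-- The value of the game (games are determined, so this coincides with the upper value). -/
noncomputable def PTG.val (G : PTG) (s : G.Config) : EReal := G.lval s

/-- The fake value of a Min strategy `σ` at configuration `s`: the supremum of the costs of
the plays consistent with `σ` from `s` that do reach a final location. -/
noncomputable def PTG.fakeVal (G : PTG) (σ : StratFun G.Loc) (s : G.Config) : EReal :=
  sSup {x : EReal | ∃ h : Hist G.Loc, h.start = s ∧ G.HistValid h ∧
    G.Consistent Owner.min σ h ∧ G.owner h.last.1 = Owner.final ∧
    x = (((G.accCost h + G.fcost h.last.1 h.last.2) : ℝ) : EReal)}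

/-- Well-formedness of a PTG: transitions leave non-final locations only, guards are
contained in `[0, M]`, urgent locations are non-final, final cost functions are affine with
rational coefficients, and the game is deadlock-free. -/
def PTG.WF (G : PTG) : Prop :=
  (∀ δ ∈ G.trans, G.owner δ.src ≠ Owner.final) ∧
  (∀ δ ∈ G.trans, 0 ≤ δ.lo ∧ δ.hi ≤ (G.M : ℝ)) ∧
  (∀ ℓ, G.urgent ℓ = true → G.owner ℓ ≠ Owner.final) ∧
  (∀ ℓ, G.owner ℓ = Owner.final → ∃ a b : ℚ, ∀ ν : ℝ, G.fcost ℓ ν = (a : ℝ) * ν + (b : ℝ)) ∧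
  (∀ (ℓ : G.Loc) (ν : ℝ), G.owner ℓ ≠ Owner.final → 0 ≤ ν → ν ≤ (G.M : ℝ) →
    ∃ s' t δ c, G.Move (ℓ, ν) s' t δ c)

/-- All guards have natural-number endpoints. -/
def PTG.NatEndpoints (G : PTG) : Prop :=
  ∀ δ ∈ G.trans, (∃ n : ℕ, δ.lo = (n : ℝ)) ∧ ∃ n : ℕ, δ.hi = (n : ℝ)

/-- `P_T`: the largest absolute value of a transition price. -/
def PTG.PT (G : PTG) : ℕ := G.trans.sup fun δ => δ.price.natAbs

/-- `P_L`: the largest absolute value of a location price-rate. -/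
def PTG.PL (G : PTG) : ℕ := Finset.univ.sup fun ℓ : G.Loc => (G.price ℓ).natAbs

/-- `P_f`: the largest absolute value taken by a final cost function on `[0, r]`. -/
noncomputable def PTG.Pf (G : PTG) (r : ℝ) : ℝ :=
  sSup {x : ℝ | ∃ (ℓ : G.Loc) (ν : ℝ), G.owner ℓ = Owner.final ∧ 0 ≤ ν ∧ ν ≤ r ∧
    x = |G.fcost ℓ ν|}

/-- The number of locations `|L|`. -/
def PTG.nLoc (G : PTG) : ℕ := Fintype.card G.Loc

/-- The number of final locations `|L_f|`. -/
def PTG.nFin (G : PTG) : ℕ :=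
  (Finset.univ.filter fun ℓ : G.Loc => G.owner ℓ = Owner.final).card

/-- A measure of the size of `G` (locations, transitions, and binary encodings of
the numerical constants). -/
def PTG.size (G : PTG) : ℕ :=
  G.nLoc + G.trans.card + Nat.log2 (G.M + 2) + Nat.log2 (G.PT + 2) + Nat.log2 (G.PL + 2) + 2

/-- `G` is an `r`-SPTG: every transition has guard `[0, r]` and performs no reset. -/
def PTG.IsSPTG (G : PTG) (r : ℝ) : Prop :=
  0 ≤ r ∧ r ≤ 1 ∧ ∀ δ ∈ G.trans,
    δ.lo = 0 ∧ δ.hi = r ∧ δ.loOpen = false ∧ δ.hiOpen = false ∧ δ.reset = false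

/-- The left end of the `i`-th interval determined by the points `pt` (with the convention
`ν₀ = min 0 (pt 0)`). -/
def prevPt {k : ℕ} (pt : Fin (k + 1) → ℝ) (i : Fin (k + 1)) : ℝ :=
  if (i : ℕ) = 0 then min 0 (pt 0) else
    pt ⟨(i : ℕ) - 1, lt_of_le_of_lt (Nat.sub_le _ _) i.isLt⟩

/-- A finite positional (FP) strategy of the player owning locations of kind `P` in an
`r`-SPTG: a memoryless strategy which, on each location of that player, is described by
finitely many rational threshold points `0 ≤ ν₁ < ⋯ < ν_k = r` and transitions
`δ₁, …, δ_k`, and on each induced interval either always plays immediately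
or always waits until the right endpoint of the interval. -/
structure FPStrat (G : PTG) (r : ℝ) (P : Owner) where
  strat : StratFun G.Loc
  valid : G.StratValid P strat
  memoryless : ∀ h h' : Hist G.Loc, G.HistValid h → G.HistValid h' →
    h.last = h'.last → strat h = strat h'
  points : Finset ℝ
  points_rat : ∀ p ∈ points, ∃ q : ℚ, p = (q : ℝ)
  points_mem : ∀ p ∈ points, 0 ≤ p ∧ p ≤ r
  r_mem : r ∈ points
  piecewise : ∀ ℓ : G.Loc, G.owner ℓ = P →
    ∃ (k : ℕ) (pt : Fin (k + 1) → ℝ) (δ : Fin (k + 1) → PTrans G.Loc),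
      StrictMono pt ∧ 0 ≤ pt 0 ∧ pt (Fin.last k) = r ∧ (∀ i, pt i ∈ points) ∧
      (∀ i : Fin (k + 1),
        (∀ ν : ℝ, prevPt pt i < ν → ν ≤ pt i → strat ⟨(ℓ, ν), []⟩ = (0, δ i)) ∨
        (∀ ν : ℝ, prevPt pt i < ν → ν ≤ pt i → strat ⟨(ℓ, ν), []⟩ = (pt i - ν, δ i))) ∧
      (0 < pt 0 → strat ⟨(ℓ, 0), []⟩ = (pt 0, δ 0))

/-- The size `|σ|` of an FP strategy: the number of intervals generated by its points. -/
def FPStrat.size {G : PTG} {r : ℝ} {P : Owner} (σ : FPStrat G r P) : ℕ := σ.points.card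

/-- Two clock values lie in the same interval of the partition induced by `pts`
(intervals being half-open to the left). -/
def SameInterval (pts : Finset ℝ) (ν ν' : ℝ) : Prop := ∀ p ∈ pts, (ν ≤ p ↔ ν' ≤ p)

/-- A negative cycle (NC) strategy of Min: an FP strategy such that along every consistent
finite play which starts and ends in the same location, with both clock values in the same
interval of the strategy, the sum of the prices of the discrete transitions is at most −1. -/
def FPStrat.IsNC {G : PTG} {r : ℝ} (σ : FPStrat G r Owner.min) : Prop :=
  ∀ h : Hist G.Loc, G.HistValid h → G.Consistent Owner.min σ.strat h →
    h.steps ≠ [] → h.last.1 = h.start.1 → SameInterval σ.points h.start.2 h.last.2 →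
    h.discSum ≤ -1

/-- A fake-optimal Min strategy: its fake value equals the value of the game everywhere. -/
def FPStrat.FakeOpt {G : PTG} {r : ℝ} (σ : FPStrat G r Owner.min) : Prop :=
  ∀ (ℓ : G.Loc) (ν : ℝ), 0 ≤ ν → ν ≤ r → G.fakeVal σ.strat (ℓ, ν) = G.val (ℓ, ν)

/-- An optimal Max FP strategy: its value equals the value of the game everywhere. -/
def FPStrat.Opt {G : PTG} {r : ℝ} (τ : FPStrat G r Owner.max) : Prop :=
  ∀ (ℓ : G.Loc) (ν : ℝ), 0 ≤ ν → ν ≤ r → G.maxValue τ.strat (ℓ, ν) = G.val (ℓ, ν)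

/-- A cost function on `[0, r]`: either infinite, or continuous piecewise affine with
finitely many cutpoints, all cutpoints and the values at them being rational. -/
def IsCostFunctionOn (r : ℝ) (f : ℝ → EReal) : Prop :=
  (∀ ν : ℝ, 0 ≤ ν → ν ≤ r → f ν = ⊤) ∨
  (∀ ν : ℝ, 0 ≤ ν → ν ≤ r → f ν = ⊥) ∨
  ∃ (n : ℕ) (a : Fin (n + 1) → ℚ),
    Monotone a ∧ ((a 0 : ℝ) = 0) ∧ ((a (Fin.last n) : ℝ) = r) ∧
    (∀ i, ∃ q : ℚ, f ((a i : ℚ) : ℝ) = ((q : ℝ) : EReal)) ∧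
    ∀ i : Fin n, ∃ α β : ℝ, ∀ ν : ℝ, ((a i.castSucc : ℚ) : ℝ) ≤ ν → ν ≤ ((a i.succ : ℚ) : ℝ) →
      f ν = ((α * ν + β : ℝ) : EReal)

/-- An `r`-SPTG is finitely optimal if Min has a fake-optimal NC strategy, Max has an optimal
FP strategy, and the value function of every location is a cost function. -/
def PTG.FinitelyOptimal (G : PTG) (r : ℝ) : Prop :=
  (∃ σ : FPStrat G r Owner.min, σ.IsNC ∧ σ.FakeOpt) ∧
  (∃ τ : FPStrat G r Owner.max, τ.Opt) ∧
  ∀ ℓ : G.Loc, IsCostFunctionOn r fun ν => G.val (ℓ, ν)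

/-- The finite set `F_G` of affine functions `k + φ_ℓ`, for `ℓ` final and
`k ∈ [−(|L|−1)·P_T, |L|·P_T] ∩ ℤ`. -/
def PTG.FF (G : PTG) : Set (ℝ → ℝ) :=
  {f | ∃ (ℓ : G.Loc) (k : ℤ), G.owner ℓ = Owner.final ∧
    -(((G.nLoc : ℤ) - 1) * (G.PT : ℤ)) ≤ k ∧ k ≤ (G.nLoc : ℤ) * (G.PT : ℤ) ∧
    f = fun ν => (k : ℝ) + G.fcost ℓ ν}

noncomputable def PTG.FFcard (G : PTG) : ℕ := G.FF.ncard

/-- The set of possible cutpoints: intersection points of two distinct functions of `F_G`. -/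
def PTG.posscp (G : PTG) (r : ℝ) : Set ℝ :=
  {ν | 0 ≤ ν ∧ ν ≤ r ∧ ∃ f₁ ∈ G.FF, ∃ f₂ ∈ G.FF, f₁ ≠ f₂ ∧ f₁ ν = f₂ ν}

/-- The construction `Wait(G, r, x)`: all guards are restricted to `[0, r]` and, for every
non-urgent location `ℓ`, a clone final location `ℓ^f` is added, with final cost function
`ν ↦ (r − ν)·π(ℓ) + x_ℓ`, together with a price-0 transition `(ℓ, ℓ^f)`.
(Clone locations are created for all locations; those of urgent or final locations are
unreachable since no transition leads to them.) -/
noncomputable def PTG.wait (G : PTG) (r : ℝ) (x : G.Loc → ℝ) : PTG where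
  Loc := G.Loc ⊕ G.Loc
  locFin := inferInstance
  locDec := inferInstance
  owner := Sum.elim G.owner fun _ => Owner.final
  urgent := Sum.elim G.urgent fun _ => false
  M := G.M
  trans :=
    (G.trans.image fun δ =>
      { src := Sum.inl δ.src, lo := max δ.lo 0, hi := min δ.hi r,
        loOpen := δ.loOpen, hiOpen := δ.hiOpen, reset := δ.reset,
        price := δ.price, tgt := Sum.inl δ.tgt }) ∪
    ((Finset.univ.filter fun ℓ : G.Loc =>
        G.owner ℓ ≠ Owner.final ∧ G.urgent ℓ = false).image
      fun ℓ => { src := Sum.inl ℓ, lo := 0, hi := r, loOpen := false, hiOpen := false,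
                 reset := false, price := 0, tgt := Sum.inr ℓ })
  price := Sum.elim G.price fun _ => 0
  fcost := Sum.elim G.fcost fun ℓ ν => (r - ν) * (G.price ℓ : ℝ) + x ℓ

/-- `G_r = Wait(G, r, (Val_G(ℓ, r))_ℓ)`. -/
noncomputable def PTG.Gr (G : PTG) (r : ℝ) : PTG :=
  G.wait r fun ℓ => (G.val (ℓ, r)).toReal

/-- Making the locations indicated by `S` urgent. -/
def PTG.makeUrgent (G : PTG) (S : G.Loc → Bool) : PTG :=
  { G with urgent := fun ℓ => G.urgent ℓ || S ℓ }

/-- `G_{L', r}`: the game `G_r` in which all locations of `L'` are made urgent. -/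
noncomputable def PTG.GLr (G : PTG) (S : G.Loc → Bool) (r : ℝ) : PTG :=
  (G.Gr r).makeUrgent (Sum.elim S fun _ => false)

/-- The operator `Next_{L'}(r)`: the supremum of the `r' ≤ r` such that the value functions
of `G_{L',r}` and of `G` coincide on `[r', r]`. -/
noncomputable def PTG.Next (G : PTG) (S : G.Loc → Bool) (r : ℝ) : ℝ :=
  sSup {r' : ℝ | 0 ≤ r' ∧ r' ≤ r ∧ ∀ (ℓ : G.Loc) (ν : ℝ), r' ≤ ν → ν ≤ r →
    (G.GLr S r).val (Sum.inl ℓ, ν) = G.val (ℓ, ν)}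

/-- Turning additionally location `ℓ` urgent: `L' ∪ {ℓ}` as a Boolean predicate. -/
def addLoc (G : PTG) (S : G.Loc → Bool) (ℓ : G.Loc) : G.Loc → Bool :=
  fun ℓ' => S ℓ' || decide (ℓ' = ℓ)

/-- The singleton `{ℓ}` as a Boolean predicate. -/
def singLoc (G : PTG) (ℓ : G.Loc) : G.Loc → Bool := fun ℓ' => decide (ℓ' = ℓ)

/-- `f` is, on `[0, r]`, piecewise affine with at most `N` cutpoints. -/
def PWAffineOn (r : ℝ) (f : ℝ → EReal) (N : ℕ) : Prop :=
  ∃ n : ℕ, n ≤ N ∧ ∃ a : Fin (n + 2) → ℝ,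
    Monotone a ∧ a 0 = 0 ∧ a (Fin.last (n + 1)) = r ∧
    ∀ i : Fin (n + 1), ∃ α β : ℝ, ∀ ν : ℝ, a i.castSucc ≤ ν → ν ≤ a i.succ →
      f ν = ((α * ν + β : ℝ) : EReal)

/-- `f` has a cutpoint in `[a, b)`: some point of `[a, b)` has no neighbourhood
(within `[0,1]`) on which `f` is affine. -/
def HasCutpointIn (f : ℝ → EReal) (a b : ℝ) : Prop :=
  ∃ x : ℝ, a ≤ x ∧ x < b ∧ ∀ ε : ℝ, 0 < ε →
    ¬ ∃ α β : ℝ, ∀ ν : ℝ, max 0 (x - ε) ≤ ν → ν ≤ min 1 (x + ε) →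
      f ν = ((α * ν + β : ℝ) : EReal)

/-- The endpoints of the guards of `G`, together with `0`. -/
noncomputable def PTG.endpoints (G : PTG) : Finset ℝ :=
  insert 0 ((G.trans.image PTrans.lo) ∪ (G.trans.image PTrans.hi))

/-- `s` is a region of `G`: a singleton of an endpoint, or an open interval between two
consecutive endpoints. -/
def PTG.IsRegion (G : PTG) (s : Set ℝ) : Prop :=
  (∃ e ∈ G.endpoints, s = {e}) ∨
  ∃ e ∈ G.endpoints, ∃ e' ∈ G.endpoints, e < e' ∧
    (∀ p ∈ G.endpoints, p ≤ e ∨ e' ≤ p) ∧ s = Set.Ioo e e'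

/-- No cycle of the configuration graph of `G` traverses a resetting transition. -/
def PTG.ResetAcyclic (G : PTG) : Prop :=
  ¬ ∃ h : Hist G.Loc, G.HistValid h ∧ h.steps ≠ [] ∧ h.last = h.start ∧
      ∃ st ∈ h.steps, st.2.1.reset = true

/-- An `ε`-optimal strategy of Min. -/
def PTG.MinEpsOpt (G : PTG) (σ : StratFun G.Loc) (ε : ℝ) : Prop :=
  G.MinValid σ ∧ ∀ (ℓ : G.Loc) (ν : ℝ), 0 ≤ ν → ν ≤ (G.M : ℝ) →
    G.minValue σ (ℓ, ν) ≤ G.val (ℓ, ν) + (ε : EReal)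

/-- An `ε`-optimal strategy of Max. -/
def PTG.MaxEpsOpt (G : PTG) (τ : StratFun G.Loc) (ε : ℝ) : Prop :=
  G.MaxValid τ ∧ ∀ (ℓ : G.Loc) (ν : ℝ), 0 ≤ ν → ν ≤ (G.M : ℝ) →
    G.val (ℓ, ν) - (ε : EReal) ≤ G.maxValue τ (ℓ, ν)

end PTGPaper

/-!
The owner of a non-urgent location `ℓ` may, from `(ℓ, ν)`, wait `ν' - ν` time units and then
play as from `(ℓ, ν')`. Guards are only tested after the delay, so a play from `(ℓ, ν')` becomes
a legal play from `(ℓ, ν)` by adding `ν' - ν` to its first delay, reaching the same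
configurations at a price increased by exactly `(ν' - ν) · π(ℓ)`. Conversely, every strategy of
the opponent from `(ℓ, ν)` is replayed from `(ℓ, ν')` on the shifted plays: the opponent never
moves first at `ℓ`. Matching strategies in this way compares the values at `ν` and `ν'`.
-/

namespace PTGPaper

namespace Hist

variable {L : Type}

def addFirstDelay (d : ℝ) : List (ℝ × PTrans L × (L × ℝ)) → List (ℝ × PTrans L × (L × ℝ))
  | [] => []
  | (t, δ, s) :: rest => (t + d, δ, s) :: rest

@[simp]
lemma addFirstDelay_nil (d : ℝ) :
    addFirstDelay d ([] : List (ℝ × PTrans L × (L × ℝ))) = [] := rfl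

@[simp]
lemma addFirstDelay_cons (d t : ℝ) (δ : PTrans L) (s : L × ℝ)
    (rest : List (ℝ × PTrans L × (L × ℝ))) :
    addFirstDelay d ((t, δ, s) :: rest) = (t + d, δ, s) :: rest := rfl

lemma addFirstDelay_addFirstDelay (d e : ℝ) (l : List (ℝ × PTrans L × (L × ℝ))) :
    addFirstDelay e (addFirstDelay d l) = addFirstDelay (d + e) l := by
  rcases l with _ | ⟨⟨t, δ, s⟩, rest⟩ <;> simp [add_assoc]

@[simp]
lemma addFirstDelay_zero (l : List (ℝ × PTrans L × (L × ℝ))) : addFirstDelay 0 l = l := by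
  rcases l with _ | ⟨⟨t, δ, s⟩, rest⟩ <;> simp

@[simp]
lemma addFirstDelay_eq_nil {d : ℝ} {l : List (ℝ × PTrans L × (L × ℝ))} :
    addFirstDelay d l = [] ↔ l = [] := by
  rcases l with _ | ⟨⟨t, δ, s⟩, rest⟩ <;> simp

lemma addFirstDelay_append (d : ℝ) {l : List (ℝ × PTrans L × (L × ℝ))}
    (u : List (ℝ × PTrans L × (L × ℝ))) (hl : l ≠ []) :
    addFirstDelay d (l ++ u) = addFirstDelay d l ++ u := by
  rcases l with _ | ⟨⟨t, δ, s⟩, rest⟩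
  · exact absurd rfl hl
  · simp

lemma lastFrom_addFirstDelay (d : ℝ) {l : List (ℝ × PTrans L × (L × ℝ))} (hl : l ≠ [])
    (s s' : L × ℝ) : lastFrom s (addFirstDelay d l) = lastFrom s' l := by
  rcases l with _ | ⟨⟨t, δ, c⟩, rest⟩
  · exact absurd rfl hl
  · simp [lastFrom]

lemma costFrom_addFirstDelay (π : L → ℤ) (d : ℝ) {l : List (ℝ × PTrans L × (L × ℝ))}
    (hl : l ≠ []) {s s' : L × ℝ} (hs : s.1 = s'.1) :
    costFrom π s (addFirstDelay d l) = d * π s.1 + costFrom π s' l := by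
  rcases l with _ | ⟨⟨t, δ, c⟩, rest⟩
  · exact absurd rfl hl
  · simp only [addFirstDelay_cons, costFrom, hs]
    ring

def restart (s : L × ℝ) (d : ℝ) (h : Hist L) : Hist L := ⟨s, addFirstDelay d h.steps⟩

lemma restart_restart (s s' : L × ℝ) (d e : ℝ) (h : Hist L) :
    (h.restart s d).restart s' e = h.restart s' (d + e) := by
  simp [restart, addFirstDelay_addFirstDelay]

@[simp]
lemma restart_start_zero (h : Hist L) : h.restart h.start 0 = h := by
  simp [restart]

lemma last_of_steps_eq_nil {h : Hist L} (hh : h.steps = []) : h.last = h.start := by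
  simp [last, hh, lastFrom]

lemma last_restart {h : Hist L} (hne : h.steps ≠ []) (s : L × ℝ) (d : ℝ) :
    (h.restart s d).last = h.last :=
  lastFrom_addFirstDelay d hne s h.start

lemma last_fst_restart {h : Hist L} {s : L × ℝ} (hs : s.1 = h.start.1) (d : ℝ) :
    (h.restart s d).last.1 = h.last.1 := by
  by_cases hnil : h.steps = []
  · rw [last_of_steps_eq_nil hnil, last_of_steps_eq_nil (by simp [restart, hnil])]
    exact hs
  · rw [last_restart hnil]

open Classical in
noncomputable def addDelayIfNil (d : ℝ) (h : Hist L) (m : ℝ × PTrans L) : ℝ × PTrans L :=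
  if h.steps = [] then (m.1 + d, m.2) else m

lemma addDelayIfNil_of_ne_nil {h : Hist L} (hne : h.steps ≠ []) (d : ℝ) (m : ℝ × PTrans L) :
    h.addDelayIfNil d m = m := by
  simp [addDelayIfNil, hne]

@[simp]
lemma addDelayIfNil_restart (h : Hist L) (s : L × ℝ) (d e : ℝ) (m : ℝ × PTrans L) :
    (h.restart s e).addDelayIfNil d m = h.addDelayIfNil d m := by
  simp [addDelayIfNil, restart]

end Hist

namespace PTG

variable (G : PTG)

def extend (h : Hist G.Loc) (td : ℝ × PTrans G.Loc) : Hist G.Loc :=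
  ⟨h.start, h.steps ++ [(td.1, td.2, G.nextCfg h.last td)]⟩

def moveOf (σ τ : StratFun G.Loc) (h : Hist G.Loc) : ℝ × PTrans G.Loc :=
  if G.owner h.last.1 = Owner.min then σ h else τ h

lemma histOf_succ (σ τ : StratFun G.Loc) (s₀ : G.Config) (n : ℕ) :
    G.histOf σ τ s₀ (n + 1) =
      if G.owner (G.histOf σ τ s₀ n).last.1 = Owner.final then G.histOf σ τ s₀ n
      else G.extend (G.histOf σ τ s₀ n) (G.moveOf σ τ (G.histOf σ τ s₀ n)) := rfl

lemma histOf_start (σ τ : StratFun G.Loc) (s₀ : G.Config) (n : ℕ) :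
    (G.histOf σ τ s₀ n).start = s₀ := by
  induction n with
  | zero => rfl
  | succ n ih =>
    rw [histOf_succ]
    split_ifs
    exacts [ih, ih]

variable {G}

lemma restart_extend {h : Hist G.Loc} {s : G.Config} {d : ℝ} (hs : s.2 + d = h.start.2)
    (td : ℝ × PTrans G.Loc) :
    (G.extend h td).restart s d = G.extend (h.restart s d) (h.addDelayIfNil d td) := by
  by_cases hnil : h.steps = []
  · simp only [extend, Hist.restart, Hist.addDelayIfNil, hnil, if_true, Hist.addFirstDelay_nil,
      List.nil_append, Hist.addFirstDelay_cons, Hist.last,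
      Hist.lastFrom, nextCfg, ← hs]
    ring_nf
  · simp only [extend, Hist.restart, Hist.addFirstDelay_append _ _ hnil,
      Hist.addDelayIfNil_of_ne_nil hnil]
    rw [← Hist.restart, Hist.last_restart hnil]

lemma accCost_restart {h : Hist G.Loc} (hne : h.steps ≠ []) {s : G.Config}
    (hs : s.1 = h.start.1) (d : ℝ) :
    G.accCost (h.restart s d) = d * G.price s.1 + G.accCost h :=
  Hist.costFrom_addFirstDelay _ d hne hs

lemma Move.from_earlier {ℓ : G.Loc} {ν ν' : ℝ} {s : G.Config} {t : ℝ} {δ : PTrans G.Loc}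
    {c : ℝ} (hm : G.Move (ℓ, ν') s t δ c) (hu : G.urgent ℓ = false) (hle : ν ≤ ν') :
    G.Move (ℓ, ν) s (t + (ν' - ν)) δ (c + (ν' - ν) * G.price ℓ) := by
  obtain ⟨hδ, hsrc, ht, -, hg, htgt, hclk, hc⟩ := hm
  have hsum : ν + (t + (ν' - ν)) = ν' + t := by ring
  refine ⟨hδ, hsrc, by linarith, by simp [hu], ?_, htgt, ?_, ?_⟩
  · simpa only [hsum] using hg
  · simpa only [hsum] using hclk
  · rw [hc]
    ring

lemma validFrom_append {s : G.Config} {l : List (ℝ × PTrans G.Loc × G.Config)} {s' : G.Config}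
    {t : ℝ} {δ : PTrans G.Loc} {c : ℝ} (hv : G.ValidFrom s l)
    (hm : G.Move (Hist.lastFrom s l) s' t δ c) : G.ValidFrom s (l ++ [(t, δ, s')]) := by
  induction l generalizing s with
  | nil => exact ⟨⟨c, hm⟩, trivial⟩
  | cons x rest ih => exact ⟨hv.1, ih hv.2 hm⟩

lemma histValid_extend {h : Hist G.Loc} {td : ℝ × PTrans G.Loc} {s : G.Config} {c : ℝ}
    (hv : G.HistValid h) (hm : G.Move h.last s td.1 td.2 c) : G.HistValid (G.extend h td) := by
  have hs : s = G.nextCfg h.last td := Prod.ext hm.2.2.2.2.2.1 hm.2.2.2.2.2.2.1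
  subst hs
  exact ⟨hv.1, hv.2.1, validFrom_append hv.2.2 hm⟩

lemma histValid_restart {h : Hist G.Loc} {ℓ : G.Loc} {ν ν' : ℝ} (hv : G.HistValid h)
    (hs : h.start = (ℓ, ν')) (hu : G.urgent ℓ = false) (h0 : 0 ≤ ν) (hle : ν ≤ ν') :
    G.HistValid (h.restart (ℓ, ν) (ν' - ν)) := by
  obtain ⟨-, hM, hsteps⟩ := hv
  rw [hs] at hM hsteps
  refine ⟨h0, hle.trans hM, ?_⟩
  show G.ValidFrom (ℓ, ν) (Hist.addFirstDelay (ν' - ν) h.steps)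
  rcases hl : h.steps with _ | ⟨⟨t, δ, s⟩, rest⟩
  · trivial
  · rw [hl] at hsteps
    obtain ⟨⟨c, hm⟩, hrest⟩ := hsteps
    exact ⟨⟨_, hm.from_earlier hu hle⟩, hrest⟩

lemma moveOf_legal {σ τ : StratFun G.Loc} {h : Hist G.Loc} (hσ : G.MinValid σ)
    (hτ : G.MaxValid τ) (hv : G.HistValid h) (hf : G.owner h.last.1 ≠ Owner.final) :
    ∃ s c, G.Move h.last s (G.moveOf σ τ h).1 (G.moveOf σ τ h).2 c := by
  unfold moveOf
  cases ho : G.owner h.last.1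
  · simpa using hσ h hv ho
  · simpa using hτ h hv ho
  · exact absurd ho hf

lemma histValid_histOf {σ τ : StratFun G.Loc} {s₀ : G.Config} (hσ : G.MinValid σ)
    (hτ : G.MaxValid τ) (h₀ : G.HistValid ⟨s₀, []⟩) (n : ℕ) :
    G.HistValid (G.histOf σ τ s₀ n) := by
  induction n with
  | zero => exact h₀
  | succ n ih =>
    rw [histOf_succ]
    split_ifs with hf
    · exact ih
    · obtain ⟨s, c, hm⟩ := moveOf_legal hσ hτ ih hf
      exact histValid_extend ih hm

section Delay

variable (G) (ℓ₀ : G.Loc) (ν ν' : ℝ)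

open Classical in
/-- From `(ℓ₀, ν)`: wait `ν' - ν` longer before the first move, then play `ρ` as if the play
had started at `(ℓ₀, ν')`. -/
noncomputable def delayStrat (ρ : StratFun G.Loc) : StratFun G.Loc := fun h =>
  if h.start = (ℓ₀, ν) ∧ G.HistValid (h.restart (ℓ₀, ν') (ν - ν')) then
    h.addDelayIfNil (ν' - ν) (ρ (h.restart (ℓ₀, ν') (ν - ν')))
  else ρ h

open Classical in
/-- From `(ℓ₀, ν')`: play `ρ` as if the play had started at `(ℓ₀, ν)` with a first delay
longer by `ν' - ν`. -/
noncomputable def undelayStrat (ρ : StratFun G.Loc) : StratFun G.Loc := fun h =>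
  ρ (if h.start = (ℓ₀, ν') then h.restart (ℓ₀, ν) (ν' - ν) else h)

variable {G ℓ₀ ν ν'}

lemma delayStrat_valid {P : Owner} {ρ : StratFun G.Loc} (hρ : G.StratValid P ρ)
    (hu : G.urgent ℓ₀ = false) (hle : ν ≤ ν') :
    G.StratValid P (G.delayStrat ℓ₀ ν ν' ρ) := by
  intro h hv hP
  simp only [delayStrat]
  split_ifs with hh
  · obtain ⟨hs, hv'⟩ := hh
    by_cases hnil : h.steps = []
    · have hlast : h.last = (ℓ₀, ν) := by rw [Hist.last_of_steps_eq_nil hnil, hs]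
      have hlast' : (h.restart (ℓ₀, ν') (ν - ν')).last = (ℓ₀, ν') :=
        Hist.last_of_steps_eq_nil (by simp [Hist.restart, hnil])
      rw [hlast] at hP ⊢
      obtain ⟨s, c, hm⟩ := hρ _ hv' (by rwa [hlast'])
      rw [hlast'] at hm
      simp only [Hist.addDelayIfNil, if_pos hnil]
      exact ⟨s, _, hm.from_earlier hu hle⟩
    · rw [Hist.addDelayIfNil_of_ne_nil hnil, ← Hist.last_restart hnil (ℓ₀, ν') (ν - ν')]
      rw [← Hist.last_restart hnil (ℓ₀, ν') (ν - ν')] at hP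
      exact hρ _ hv' hP
  · exact hρ h hv hP

lemma undelayStrat_valid {P : Owner} {ρ : StratFun G.Loc} (hρ : G.StratValid P ρ)
    (hP₀ : G.owner ℓ₀ ≠ P) (hu : G.urgent ℓ₀ = false) (h0 : 0 ≤ ν) (hle : ν ≤ ν') :
    G.StratValid P (G.undelayStrat ℓ₀ ν ν' ρ) := by
  intro h hv hP
  simp only [undelayStrat]
  split_ifs with hs
  · have hnil : h.steps ≠ [] := fun hnil =>
      hP₀ (by rwa [Hist.last_of_steps_eq_nil hnil, hs] at hP)
    rw [← Hist.last_restart hnil (ℓ₀, ν) (ν' - ν)] at hP ⊢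
    exact hρ _ (histValid_restart hv hs hu h0 hle) hP
  · exact hρ h hv hP

lemma delayStrat_restart {ρ : StratFun G.Loc} {h : Hist G.Loc} (hv : G.HistValid h)
    (hs : h.start = (ℓ₀, ν')) :
    G.delayStrat ℓ₀ ν ν' ρ (h.restart (ℓ₀, ν) (ν' - ν)) = h.addDelayIfNil (ν' - ν) (ρ h) := by
  have hback : (h.restart (ℓ₀, ν) (ν' - ν)).restart (ℓ₀, ν') (ν - ν') = h := by
    rw [Hist.restart_restart, ← hs, show ν' - ν + (ν - ν') = 0 by ring, Hist.restart_start_zero]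
  simp only [delayStrat, hback, Hist.addDelayIfNil_restart]
  rw [if_pos ⟨rfl, by rwa [hback]⟩]

lemma undelayStrat_apply_of_start {ρ : StratFun G.Loc} {h : Hist G.Loc}
    (hs : h.start = (ℓ₀, ν')) :
    G.undelayStrat ℓ₀ ν ν' ρ h = ρ (h.restart (ℓ₀, ν) (ν' - ν)) := by
  simp [undelayStrat, hs]

lemma histOf_eq_restart {σ τ σ' τ' : StratFun G.Loc}
    (hv : ∀ n, G.HistValid (G.histOf σ' τ' (ℓ₀, ν') n))
    (hmove : ∀ h : Hist G.Loc, G.HistValid h → h.start = (ℓ₀, ν') →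
      G.owner h.last.1 ≠ Owner.final →
      G.moveOf σ τ (h.restart (ℓ₀, ν) (ν' - ν)) = h.addDelayIfNil (ν' - ν) (G.moveOf σ' τ' h))
    (n : ℕ) :
    G.histOf σ τ (ℓ₀, ν) n = (G.histOf σ' τ' (ℓ₀, ν') n).restart (ℓ₀, ν) (ν' - ν) := by
  induction n with
  | zero => rfl
  | succ n ih =>
    have hs := G.histOf_start σ' τ' (ℓ₀, ν') n
    rw [histOf_succ, histOf_succ, ih, Hist.last_fst_restart (by rw [hs])]
    split_ifs with hf
    · rfl
    · rw [hmove _ (hv n) hs hf, restart_extend (by rw [hs]; ring)]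

lemma playCost_eq_of_histOf_eq_restart {σ τ σ' τ' : StratFun G.Loc}
    (hfin : G.owner ℓ₀ ≠ Owner.final)
    (H : ∀ n, G.histOf σ τ (ℓ₀, ν) n = (G.histOf σ' τ' (ℓ₀, ν') n).restart (ℓ₀, ν) (ν' - ν)) :
    G.playCost σ τ (ℓ₀, ν) =
      (((ν' - ν) * G.price ℓ₀ : ℝ) : EReal) + G.playCost σ' τ' (ℓ₀, ν') := by
  have hs := G.histOf_start σ' τ' (ℓ₀, ν')
  have hfst : ∀ n, (G.histOf σ τ (ℓ₀, ν) n).last.1 = (G.histOf σ' τ' (ℓ₀, ν') n).last.1 :=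
    fun n => by rw [H n]; exact Hist.last_fst_restart (by rw [hs n]) _
  have hpred : ∀ {n}, G.owner (G.histOf σ τ (ℓ₀, ν) n).last.1 = Owner.final ↔
      G.owner (G.histOf σ' τ' (ℓ₀, ν') n).last.1 = Owner.final := by
    intro n
    rw [hfst]
  unfold playCost
  by_cases hx' : ∃ n, G.owner (G.histOf σ' τ' (ℓ₀, ν') n).last.1 = Owner.final
  · have hx : ∃ n, G.owner (G.histOf σ τ (ℓ₀, ν) n).last.1 = Owner.final :=
      hx'.imp fun _ => hpred.2
    rw [dif_pos hx, dif_pos hx', Nat.find_congr' (hq := hx') hpred]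
    set n := Nat.find hx'
    have hfinal : G.owner (G.histOf σ' τ' (ℓ₀, ν') n).last.1 = Owner.final := Nat.find_spec hx'
    have hne : (G.histOf σ' τ' (ℓ₀, ν') n).steps ≠ [] := fun hnil =>
      hfin (by rwa [Hist.last_of_steps_eq_nil hnil, hs n] at hfinal)
    rw [H n, accCost_restart hne (by rw [hs n]), Hist.last_restart hne, ← EReal.coe_add, add_assoc]
  · rw [dif_neg fun hx => hx' (hx.imp fun _ => hpred.1), dif_neg hx']
    exact (EReal.coe_add_top _).symm

lemma playCost_delayStrat_of_owner_min {σ' τ : StratFun G.Loc}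
    (hℓ₀ : G.owner ℓ₀ = Owner.min) (hu : G.urgent ℓ₀ = false) (h0 : 0 ≤ ν) (hle : ν ≤ ν')
    (hM : ν' ≤ (G.M : ℝ)) (hσ' : G.MinValid σ') (hτ : G.MaxValid τ) :
    G.playCost (G.delayStrat ℓ₀ ν ν' σ') τ (ℓ₀, ν) =
      (((ν' - ν) * G.price ℓ₀ : ℝ) : EReal) +
        G.playCost σ' (G.undelayStrat ℓ₀ ν ν' τ) (ℓ₀, ν') := by
  have hτ' : G.MaxValid (G.undelayStrat ℓ₀ ν ν' τ) :=
    undelayStrat_valid hτ (by simp [hℓ₀]) hu h0 hle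
  refine playCost_eq_of_histOf_eq_restart (by simp [hℓ₀]) (histOf_eq_restart
    (histValid_histOf hσ' hτ' ⟨h0.trans hle, hM, trivial⟩) fun h hv hs _ => ?_)
  simp only [moveOf, Hist.last_fst_restart (show (ℓ₀, ν).1 = h.start.1 by rw [hs])]
  split_ifs with ho
  · exact delayStrat_restart hv hs
  · have hne : h.steps ≠ [] := fun hnil =>
      ho (by rw [Hist.last_of_steps_eq_nil hnil, hs]; exact hℓ₀)
    rw [undelayStrat_apply_of_start hs, Hist.addDelayIfNil_of_ne_nil hne]

lemma playCost_delayStrat_of_owner_max {σ τ' : StratFun G.Loc}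
    (hℓ₀ : G.owner ℓ₀ = Owner.max) (hu : G.urgent ℓ₀ = false) (h0 : 0 ≤ ν) (hle : ν ≤ ν')
    (hM : ν' ≤ (G.M : ℝ)) (hσ : G.MinValid σ) (hτ' : G.MaxValid τ') :
    G.playCost σ (G.delayStrat ℓ₀ ν ν' τ') (ℓ₀, ν) =
      (((ν' - ν) * G.price ℓ₀ : ℝ) : EReal) +
        G.playCost (G.undelayStrat ℓ₀ ν ν' σ) τ' (ℓ₀, ν') := by
  have hσ' : G.MinValid (G.undelayStrat ℓ₀ ν ν' σ) :=
    undelayStrat_valid hσ (by simp [hℓ₀]) hu h0 hle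
  refine playCost_eq_of_histOf_eq_restart (by simp [hℓ₀]) (histOf_eq_restart
    (histValid_histOf hσ' hτ' ⟨h0.trans hle, hM, trivial⟩) fun h hv hs _ => ?_)
  simp only [moveOf, Hist.last_fst_restart (show (ℓ₀, ν).1 = h.start.1 by rw [hs])]
  split_ifs with ho
  · have hne : h.steps ≠ [] := fun hnil => by
      rw [Hist.last_of_steps_eq_nil hnil, hs] at ho
      simp [hℓ₀] at ho
    rw [undelayStrat_apply_of_start hs, Hist.addDelayIfNil_of_ne_nil hne]
  · exact delayStrat_restart hv hs

end Delay

end PTG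

noncomputable def addRealOrderIso (c : ℝ) : EReal ≃o EReal :=
  Equiv.toOrderIso
    { toFun := ((c : EReal) + ·)
      invFun := (((-c : ℝ) : EReal) + ·)
      left_inv := fun x => by
        simp only [← add_assoc, ← EReal.coe_add, neg_add_cancel, EReal.coe_zero, zero_add]
      right_inv := fun x => by
        simp only [← add_assoc, ← EReal.coe_add, add_neg_cancel, EReal.coe_zero, zero_add] }
    (fun _ _ h => add_le_add_right h (c : EReal))
    (fun _ _ h => add_le_add_right h ((-c : ℝ) : EReal))

@[simp]
lemma addRealOrderIso_apply (c : ℝ) (x : EReal) : addRealOrderIso c x = c + x := rfl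

lemma coe_add_iSup_iInf {ι κ : Sort*} (c : ℝ) (f : ι → κ → EReal) :
    (c : EReal) + ⨆ i, ⨅ k, f i k = ⨆ i, ⨅ k, ((c : EReal) + f i k) := by
  simp only [← addRealOrderIso_apply, OrderIso.map_iSup, OrderIso.map_iInf]

namespace PTG

variable {G : PTG} {ℓ : G.Loc} {ν ν' : ℝ}

theorem val_le_add_val_of_owner_min (hℓ : G.owner ℓ = Owner.min) (hu : G.urgent ℓ = false)
    (h0 : 0 ≤ ν) (hle : ν ≤ ν') (hM : ν' ≤ (G.M : ℝ)) :
    G.val (ℓ, ν) ≤ (((ν' - ν) * G.price ℓ : ℝ) : EReal) + G.val (ℓ, ν') := by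
  simp only [val, lval, maxValue]
  rw [coe_add_iSup_iInf]
  exact iSup_mono' fun τ =>
    ⟨⟨G.undelayStrat ℓ ν ν' τ.1, undelayStrat_valid τ.2 (by simp [hℓ]) hu h0 hle⟩,
      iInf_mono' fun σ' => ⟨⟨G.delayStrat ℓ ν ν' σ'.1, delayStrat_valid σ'.2 hu hle⟩,
        (playCost_delayStrat_of_owner_min hℓ hu h0 hle hM σ'.2 τ.2).le⟩⟩

theorem add_val_le_val_of_owner_max (hℓ : G.owner ℓ = Owner.max) (hu : G.urgent ℓ = false)
    (h0 : 0 ≤ ν) (hle : ν ≤ ν') (hM : ν' ≤ (G.M : ℝ)) :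
    (((ν' - ν) * G.price ℓ : ℝ) : EReal) + G.val (ℓ, ν') ≤ G.val (ℓ, ν) := by
  simp only [val, lval, maxValue]
  rw [coe_add_iSup_iInf]
  exact iSup_mono' fun τ' =>
    ⟨⟨G.delayStrat ℓ ν ν' τ'.1, delayStrat_valid τ'.2 hu hle⟩,
      iInf_mono' fun σ =>
        ⟨⟨G.undelayStrat ℓ ν ν' σ.1, undelayStrat_valid σ.2 (by simp [hℓ]) hu h0 hle⟩,
        (playCost_delayStrat_of_owner_max hℓ hu h0 hle hM σ.2 τ'.2).ge⟩⟩

/-- Deadlock-freeness at `ℓ` provides a transition, and its guard `[0, r]` lies in `[0, M]`. -/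
lemma IsSPTG.le_M {r : ℝ} (hsptg : G.IsSPTG r) (hwf : G.WF) (hℓ : G.owner ℓ ≠ Owner.final) :
    r ≤ G.M := by
  obtain ⟨_, _, δ, _, hm⟩ := hwf.2.2.2.2 ℓ 0 hℓ le_rfl (Nat.cast_nonneg _)
  exact (hsptg.2.2 δ hm.1).2.1 ▸ (hwf.2.1 δ hm.1).2

end PTG

/-- Lemma 4: in an `r`-SPTG, for every non-urgent location `ℓ` of Min
and every non-urgent location `ℓ'` of Max, and all `0 ≤ ν < ν' ≤ r`,
`Val_G(ℓ,ν) ≤ (ν'−ν)·π(ℓ) + Val_G(ℓ,ν')` and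
`Val_G(ℓ',ν) ≥ (ν'−ν)·π(ℓ') + Val_G(ℓ',ν')`. -/
theorem slope_bounds (G : PTG) (hwf : G.WF) (r : ℚ) (hsptg : G.IsSPTG (r : ℝ))
    (ℓ ℓ' : G.Loc)
    (hℓ : G.owner ℓ = Owner.min) (hℓu : G.urgent ℓ = false)
    (hℓ' : G.owner ℓ' = Owner.max) (hℓ'u : G.urgent ℓ' = false)
    (ν ν' : ℝ) (h0 : 0 ≤ ν) (hlt : ν < ν') (hr : ν' ≤ (r : ℝ)) :
    G.val (ℓ, ν) ≤ ((((ν' - ν) * (G.price ℓ : ℝ)) : ℝ) : EReal) + G.val (ℓ, ν') ∧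
    ((((ν' - ν) * (G.price ℓ' : ℝ)) : ℝ) : EReal) + G.val (ℓ', ν') ≤ G.val (ℓ', ν) := by
  have hM : ν' ≤ G.M := hr.trans (hsptg.le_M hwf (ℓ := ℓ) (by simp [hℓ]))
  exact ⟨PTG.val_le_add_val_of_owner_min hℓ hℓu h0 hlt.le hM,
    PTG.add_val_le_val_of_owner_max hℓ' hℓ'u h0 hlt.le hM⟩

end PTGPaper
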